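/- Let f(X) = X² − X − 3 and g(X) = X² − 5X + 5 as polynomials in ℚ[X]. For every n ≥ 1, the n-th iterates f^n(X) and g^n(X) (under composition) are irreducible over ℚ. -/

import Mathlib

open Polynomial

/-- `f(X) = X² - X - 3` in `ℚ[X]`. -/
noncomputable def hanoiFpoly : ℚ[X] := X ^ 2 - X - 3

/-- `g(X) = X² - 5X + 5` in `ℚ[X]`. -/
noncomputable def hanoiGpoly : ℚ[X] := X ^ 2 - 5 * X + 5

/-- The `k`-th iterate `f^k` of `f` under composition (`f⁰(X) = X`). -/
noncomputable def hanoiFiter : ℕ → ℚ[X]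
  | 0 => X
  | k + 1 => hanoiFpoly.comp (hanoiFiter k)

/-- The `k`-th iterate `g^k` of `g` under composition (`g⁰(X) = X`). -/
noncomputable def hanoiGiter : ℕ → ℚ[X]
  | 0 => X
  | k + 1 => hanoiGpoly.comp (hanoiGiter k)

/-!
Write `f = (X - 1/2)² - 13/4` and `g = (X - 5/2)² - 5/4`. If `p` is monic irreducible with root
`α`, then `p((X + s)² + r)` is irreducible as soon as `α - r` is not a square in `K(α)` (Capelli);
taking norms, it suffices that `(-1)^(deg p) p(r)` is not a square in `K`. Applied to `p = f^n`,
irreducibility of every iterate reduces to `-r` and all `f^n(r)`, `n ≥ 1`, being non-squares in `ℚ`.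
The orbit of `r = -13/4` under `f` has only powers of `2` as denominators and reduces modulo `3` to
the fixed point `2`, a non-square; for `g`, the orbit of `r = -5/4` reduces modulo `11` to the
`2`-cycle `7 ↔ 8` of non-squares.
-/

namespace Polynomial

section CommSemiring

variable {R : Type*} [CommSemiring R]

theorem iterate_comp_eq_iterate_comp_X_comp (p q : R[X]) (n : ℕ) :
    p.comp^[n] q = (p.comp^[n] X).comp q := by
  induction n with
  | zero => simp
  | succ n ih => rw [Function.iterate_succ_apply', Function.iterate_succ_apply', ih, comp_assoc]

theorem Monic.iterate_comp_X {p : R[X]} (hp : p.Monic) (hdeg : p.natDegree ≠ 0) (n : ℕ) :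
    (p.comp^[n] X).Monic := by
  induction n with
  | zero => exact monic_X
  | succ n ih =>
    rw [Function.iterate_succ_apply, iterate_comp_eq_iterate_comp_X_comp, comp_X]
    exact ih.comp hp hdeg

end CommSemiring

theorem irreducible_comp_X_add_C_iff {R : Type*} [CommRing R] {p : R[X]} (t : R) :
    Irreducible (p.comp (X + C t)) ↔ Irreducible p :=
  MulEquiv.irreducible_iff (algEquivAevalXAddC t).toMulEquiv

section Field

variable {K : Type*} [Field K]

theorem irreducible_comp_X_sq {p : K[X]} (hm : p.Monic) (hp : Irreducible p)
    (h : ¬IsSquare ((-1) ^ p.natDegree * p.coeff 0)) : Irreducible (p.comp (X ^ 2)) := by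
  refine irreducible_comp hm (monic_X_pow 2) hp fun E _ _ x hx ↦ ?_
  have hint : IsIntegral K x := by
    by_contra hx'
    exact hp.ne_zero (hx ▸ minpoly.eq_zero hx')
  rw [Polynomial.map_pow, map_X]
  refine X_pow_sub_C_irreducible_of_prime Nat.prime_two fun b hb ↦ h ?_
  have hnorm := Algebra.PowerBasis.norm_gen_eq_coeff_zero_minpoly (IntermediateField.adjoin.powerBasis hint)
  rw [IntermediateField.adjoin.powerBasis_gen, IntermediateField.adjoin.powerBasis_dim,
    IntermediateField.minpoly_gen, hx, ← hb, map_pow] at hnorm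
  exact ⟨_, hnorm ▸ sq _⟩

theorem irreducible_comp_sq_add_C {p : K[X]} (hm : p.Monic) (hp : Irreducible p) (s r : K)
    (h : ¬IsSquare ((-1) ^ p.natDegree * p.eval r)) :
    Irreducible (p.comp ((X + C s) ^ 2 + C r)) := by
  have hsplit : p.comp ((X + C s) ^ 2 + C r) =
      ((p.comp (X + C r)).comp (X ^ 2)).comp (X + C s) := by
    simp only [comp_assoc, add_comp, X_comp, C_comp, X_pow_comp]
  rw [hsplit, irreducible_comp_X_add_C_iff]
  refine irreducible_comp_X_sq (hm.comp_X_add_C r) ((irreducible_comp_X_add_C_iff r).2 hp) ?_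
  rwa [natDegree_comp, natDegree_X_add_C, mul_one, coeff_zero_eq_eval_zero, eval_comp,
    eval_add, eval_X, eval_C, zero_add]

theorem irreducible_iterate_comp_sq_add_C {s r : K} (h₀ : ¬IsSquare (-r))
    (h : ∀ n, ¬IsSquare (eval r (((X + C s) ^ 2 + C r).comp^[n + 1] X))) (n : ℕ) :
    Irreducible (((X + C s) ^ 2 + C r).comp^[n] X) := by
  have hpm : ((X + C s) ^ 2 + C r).Monic := by monicity!
  have hpd : ((X + C s) ^ 2 + C r).natDegree = 2 := by compute_degree!
  induction n with
  | zero => exact irreducible_X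
  | succ n ih =>
    rw [Function.iterate_succ_apply, iterate_comp_eq_iterate_comp_X_comp, comp_X]
    refine irreducible_comp_sq_add_C (hpm.iterate_comp_X (by omega) n) ih s r ?_
    rw [natDegree_iterate_comp, hpd, natDegree_X, mul_one]
    cases n with
    | zero => simpa using h₀
    | succ m =>
      rw [(Nat.even_pow.2 ⟨even_two, m.succ_ne_zero⟩).neg_one_pow, one_mul]
      exact h m

end Field

end Polynomial

namespace Rat

variable (K : Type*) [DivisionRing K]

/-- For `K = ZMod ℓ` these are the `ℓ`-integral rationals, and `castHom` is reduction mod `ℓ`. -/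
def denNeZeroSubring : Subring ℚ where
  carrier := {q | (q.den : K) ≠ 0}
  mul_mem' {q r} hq hr := ne_zero_of_dvd_ne_zero (by push_cast; exact mul_ne_zero hq hr)
    (Nat.cast_dvd_cast (mul_den_dvd q r))
  one_mem' := by simp
  add_mem' {q r} hq hr := ne_zero_of_dvd_ne_zero (by push_cast; exact mul_ne_zero hq hr)
    (Nat.cast_dvd_cast (add_den_dvd q r))
  zero_mem' := by simp
  neg_mem' := by simp

def denNeZeroSubring.castHom : denNeZeroSubring K →+* K where
  toFun q := ((q : ℚ) : K)
  map_one' := cast_one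
  map_mul' q r := cast_mul_of_ne_zero q.2 r.2
  map_zero' := cast_zero
  map_add' q r := cast_add_of_ne_zero q.2 r.2

variable {K}

theorem denNeZeroSubring.intCast_mul_castHom {x : denNeZeroSubring K} {d m : ℤ}
    (h : (d : ℚ) * x = m) : (d : K) * castHom K x = m := by
  have h' : (d : denNeZeroSubring K) * x = m := Subtype.ext (by push_cast; exact h)
  simpa using congrArg (castHom K) h'

theorem not_isSquare_of_not_isSquare_castHom {x : denNeZeroSubring K}
    (hx : ¬IsSquare (denNeZeroSubring.castHom K x)) : ¬IsSquare (x : ℚ) := by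
  rintro ⟨z, hz⟩
  have hz' : z ∈ denNeZeroSubring K :=
    ne_zero_of_dvd_ne_zero x.2 (Nat.cast_dvd_cast ⟨z.den, by rw [hz, mul_self_den]⟩)
  refine hx ⟨denNeZeroSubring.castHom K ⟨z, hz'⟩, ?_⟩
  rw [← map_mul]
  exact congrArg _ (Subtype.ext hz)

theorem not_isSquare_eval_iterate_comp_of_mapsTo (P : ℤ[X]) (x : denNeZeroSubring K) {A : Set K}
    (hA : ∀ a ∈ A, ¬IsSquare a) (hmaps : Set.MapsTo (fun a ↦ aeval a P) A A)
    (hx : denNeZeroSubring.castHom K x ∈ A) (n : ℕ) :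
    ¬IsSquare (eval (x : ℚ) ((P.map (algebraMap ℤ ℚ)).comp^[n] X)) := by
  have hsub : Function.Semiconj (denNeZeroSubring K).subtype
      (fun y ↦ aeval y P) (fun y ↦ aeval y P) :=
    fun y ↦ (aeval_algHom_apply (denNeZeroSubring K).subtype.toIntAlgHom y P).symm
  have hcast : Function.Semiconj (denNeZeroSubring.castHom K)
      (fun y ↦ aeval y P) (fun y ↦ aeval y P) :=
    fun y ↦ (aeval_algHom_apply (denNeZeroSubring.castHom K).toIntAlgHom y P).symm
  have horbit : eval (x : ℚ) ((P.map (algebraMap ℤ ℚ)).comp^[n] X) =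
      (((fun y ↦ aeval y P)^[n] x : denNeZeroSubring K) : ℚ) := by
    rw [iterate_comp_eval, eval_X]
    simp only [eval_map_algebraMap]
    exact (hsub.iterate_right n x).symm
  rw [horbit]
  refine not_isSquare_of_not_isSquare_castHom ?_
  rw [hcast.iterate_right n x]
  exact hA _ (hmaps.iterate n hx)

end Rat

theorem hanoiFiter_eq_iterate (n : ℕ) : hanoiFiter n = hanoiFpoly.comp^[n] X := by
  induction n with
  | zero => rfl
  | succ n ih => rw [Function.iterate_succ_apply', ← ih]; rfl

theorem hanoiGiter_eq_iterate (n : ℕ) : hanoiGiter n = hanoiGpoly.comp^[n] X := by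
  induction n with
  | zero => rfl
  | succ n ih => rw [Function.iterate_succ_apply', ← ih]; rfl

theorem hanoiFpoly_eq_sq_add_C : hanoiFpoly = (X + C (-1 / 2)) ^ 2 + C (-13 / 4) := by
  refine Polynomial.funext fun x ↦ ?_
  simp only [hanoiFpoly, eval_add, eval_sub, eval_pow, eval_X, eval_C, eval_ofNat]
  ring

theorem hanoiGpoly_eq_sq_add_C : hanoiGpoly = (X + C (-5 / 2)) ^ 2 + C (-5 / 4) := by
  refine Polynomial.funext fun x ↦ ?_
  simp only [hanoiGpoly, eval_add, eval_sub, eval_mul, eval_pow, eval_X, eval_C, eval_ofNat]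
  ring

theorem hanoiFpoly_eq_map : hanoiFpoly = (X ^ 2 - X - 3 : ℤ[X]).map (algebraMap ℤ ℚ) := by
  simp [hanoiFpoly]

theorem hanoiGpoly_eq_map : hanoiGpoly = (X ^ 2 - 5 * X + 5 : ℤ[X]).map (algebraMap ℤ ℚ) := by
  simp [hanoiGpoly]

theorem not_isSquare_eval_iterate_hanoiFpoly (n : ℕ) :
    ¬IsSquare (eval (-13 / 4) (hanoiFpoly.comp^[n] X)) := by
  have hr : (-13 / 4 : ℚ) ∈ Rat.denNeZeroSubring (ZMod 3) := by
    show (((-13 / 4 : ℚ).den : ℕ) : ZMod 3) ≠ 0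
    rw [show (-13 / 4 : ℚ).den = 4 by norm_num]
    decide
  have hr' := Rat.denNeZeroSubring.intCast_mul_castHom (x := ⟨_, hr⟩) (d := 4) (m := -13)
    (by norm_num)
  have hsolve : ∀ a : ZMod 3, (4 : ℤ) * a = (-13 : ℤ) → a = 2 := by decide
  rw [hanoiFpoly_eq_map]
  refine Rat.not_isSquare_eval_iterate_comp_of_mapsTo _ ⟨_, hr⟩ (A := {2}) ?_ ?_ (hsolve _ hr') n
  · rintro a rfl
    decide
  · rintro a rfl
    simp only [map_sub, map_pow, aeval_X, map_ofNat]
    decide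

instance fact_prime_eleven : Fact (Nat.Prime 11) := ⟨by norm_num⟩

theorem not_isSquare_eval_iterate_hanoiGpoly (n : ℕ) :
    ¬IsSquare (eval (-5 / 4) (hanoiGpoly.comp^[n] X)) := by
  have hr : (-5 / 4 : ℚ) ∈ Rat.denNeZeroSubring (ZMod 11) := by
    show (((-5 / 4 : ℚ).den : ℕ) : ZMod 11) ≠ 0
    rw [show (-5 / 4 : ℚ).den = 4 by norm_num]
    decide
  have hr' := Rat.denNeZeroSubring.intCast_mul_castHom (x := ⟨_, hr⟩) (d := 4) (m := -5)
    (by norm_num)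
  have hsolve : ∀ a : ZMod 11, (4 : ℤ) * a = (-5 : ℤ) → a = 7 := by decide
  rw [hanoiGpoly_eq_map]
  refine Rat.not_isSquare_eval_iterate_comp_of_mapsTo _ ⟨_, hr⟩ (A := {7, 8}) ?_ ?_
    (Or.inl (hsolve _ hr')) n
  · rintro a (rfl | rfl) <;> decide
  · rintro a (rfl | rfl) <;>
      simp only [map_add, map_sub, map_mul, map_pow, aeval_X, map_ofNat, Set.mem_insert_iff,
        Set.mem_singleton_iff] <;>
      decide

theorem irreducible_hanoiFiter (n : ℕ) : Irreducible (hanoiFiter n) := by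
  rw [hanoiFiter_eq_iterate, hanoiFpoly_eq_sq_add_C]
  refine irreducible_iterate_comp_sq_add_C (by norm_num) (fun k ↦ ?_) n
  rw [← hanoiFpoly_eq_sq_add_C]
  exact not_isSquare_eval_iterate_hanoiFpoly (k + 1)

theorem irreducible_hanoiGiter (n : ℕ) : Irreducible (hanoiGiter n) := by
  rw [hanoiGiter_eq_iterate, hanoiGpoly_eq_sq_add_C]
  refine irreducible_iterate_comp_sq_add_C (by norm_num) (fun k ↦ ?_) n
  rw [← hanoiGpoly_eq_sq_add_C]
  exact not_isSquare_eval_iterate_hanoiGpoly (k + 1)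

theorem hanoi_iterates_irreducible_general (n : ℕ) :
    Irreducible (hanoiFiter n) ∧ Irreducible (hanoiGiter n) :=
  ⟨irreducible_hanoiFiter n, irreducible_hanoiGiter n⟩

/-- For every `n ≥ 1`, the iterates `f^n` and `g^n` of `f(X) = X² - X - 3` and
`g(X) = X² - 5X + 5` are irreducible over `ℚ`. -/
theorem hanoi_iterates_irreducible (n : ℕ) (hn : 1 ≤ n) :
    Irreducible (hanoiFiter n) ∧ Irreducible (hanoiGiter n) :=
  hanoi_iterates_irreducible_general n
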